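/- Let w be a primitive 10th root of unity in a field K of characteristic ≠ 2, 5, and let x = diag(w³, w, w⁷, w⁹) ∈ GL₄(K). Then x ∈ Sp₄(K) for the symplectic form with Gram matrix having 1 in positions (1,3), (2,4) and −1 in positions (3,1), (4,2), and conjugation by x maps the space W₅ = {M(a,b,c,d,e)} (as defined via rows (e, zc, 2za, zb), (−d, ie, zb, c), (−b, a, −e, d), (a, 2zd, −zc, −ie) with i² = −1, z² = −1/2) onto itself. -/

import Mathlib

open Matrix

private def Fm {K : Type*} [Field K] (i z a b c d e : K) : Matrix (Fin 4) (Fin 4) K :=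
  !![e, z * c, 2 * z * a, z * b;
     -d, i * e, z * b, c;
     -b, a, -e, d;
     a, 2 * z * d, -z * c, -i * e]

private lemma Dinv {K : Type*} [Field K] (w : K) (hw10 : w ^ 10 = 1) :
    (Matrix.diagonal ![w ^ 3, w, w ^ 7, w ^ 9])⁻¹ = Matrix.diagonal ![w ^ 7, w ^ 9, w ^ 3, w] := by
  apply Matrix.inv_eq_left_inv
  ext j k
  fin_cases j <;> fin_cases k <;>
    simp [Matrix.mul_apply, Fin.sum_univ_four, Matrix.diagonal, Matrix.one_apply] <;>
    linear_combination hw10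

private lemma conj {K : Type*} [Field K] (w : K) (hw10 : w ^ 10 = 1)
    (i z a b c d e : K) :
    (Matrix.diagonal ![w ^ 3, w, w ^ 7, w ^ 9])⁻¹ * Fm i z a b c d e *
      Matrix.diagonal ![w ^ 3, w, w ^ 7, w ^ 9] =
    Fm i z (w^4*a) (w^6*b) (w^8*c) (w^2*d) e := by
  rw [Dinv w hw10]
  ext j k
  fin_cases j <;> fin_cases k <;>
    simp [Fm, Matrix.mul_apply, Fin.sum_univ_four, Matrix.diagonal] <;>
    first
      | ring1
      | linear_combination e*hw10
      | linear_combination 2*z*a*w^4*hw10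
      | linear_combination z*b*w^6*hw10
      | linear_combination d*w^2*hw10
      | linear_combination i*e*hw10
      | linear_combination c*w^8*hw10
      | linear_combination -e*hw10
      | linear_combination -2*z*a*w^4*hw10
      | linear_combination -z*b*w^6*hw10
      | linear_combination -d*w^2*hw10
      | linear_combination -i*e*hw10
      | linear_combination -c*w^8*hw10
      | linear_combination a*w^4*hw10
      | linear_combination -a*w^4*hw10
      | linear_combination b*w^6*hw10
      | linear_combination -b*w^6*hw10
      | linear_combination z*c*w^8*hw10
      | linear_combination -z*c*w^8*hw10
      | linear_combination 2*z*d*w^2*hw10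
      | linear_combination -2*z*d*w^2*hw10

private lemma Jform {K : Type*} [Field K] :
    (Matrix.single (0 : Fin 4) 2 (1 : K) + Matrix.single 1 3 (1 : K)
        - Matrix.single 2 0 (1 : K) - Matrix.single 3 1 (1 : K)) =
    !![0,0,1,0; 0,0,0,1; -1,0,0,0; 0,-1,0,0] := by
  ext j k
  fin_cases j <;> fin_cases k <;>
    simp only [Matrix.sub_apply, Matrix.add_apply] <;>
    norm_num [Matrix.single, Matrix.of_apply, Fin.ext_iff, Matrix.vecHead,
      Matrix.vecTail] <;> decide

theorem stmt_18 {K : Type*} [Field K] (h2 : (2 : K) ≠ 0) (h5 : (5 : K) ≠ 0)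
    (w : K) (hw : IsPrimitiveRoot w 10)
    (i z : K) (hi : i ^ 2 = -1) (hz : z ^ 2 = -(1 / 2)) :
    (Matrix.diagonal ![w ^ 3, w, w ^ 7, w ^ 9])ᵀ *
        (Matrix.single (0 : Fin 4) 2 (1 : K) + Matrix.single 1 3 (1 : K)
          - Matrix.single 2 0 (1 : K) - Matrix.single 3 1 (1 : K)) *
        Matrix.diagonal ![w ^ 3, w, w ^ 7, w ^ 9] =
      (Matrix.single (0 : Fin 4) 2 (1 : K) + Matrix.single 1 3 (1 : K)
        - Matrix.single 2 0 (1 : K) - Matrix.single 3 1 (1 : K)) ∧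
    (fun M => (Matrix.diagonal ![w ^ 3, w, w ^ 7, w ^ 9])⁻¹ * M *
        Matrix.diagonal ![w ^ 3, w, w ^ 7, w ^ 9]) ''
        {M : Matrix (Fin 4) (Fin 4) K | ∃ a b c d e : K,
          M = !![e, z * c, 2 * z * a, z * b;
                 -d, i * e, z * b, c;
                 -b, a, -e, d;
                 a, 2 * z * d, -z * c, -i * e]} =
      {M : Matrix (Fin 4) (Fin 4) K | ∃ a b c d e : K,
          M = !![e, z * c, 2 * z * a, z * b;
                 -d, i * e, z * b, c;
                 -b, a, -e, d;
                 a, 2 * z * d, -z * c, -i * e]} := by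
  have hw10 : w ^ 10 = 1 := hw.pow_eq_one
  constructor
  · rw [Jform, Matrix.diagonal_transpose]
    ext j k
    fin_cases j <;> fin_cases k <;>
      simp [Matrix.mul_apply, Fin.sum_univ_four, Matrix.diagonal, Matrix.vecHead,
        Matrix.vecTail] <;>
      first
        | ring1
        | linear_combination hw10
        | linear_combination -hw10
  · ext M
    simp only [Set.mem_image, Set.mem_setOf_eq]
    constructor
    · rintro ⟨N, ⟨a, b, c, d, e, rfl⟩, rfl⟩
      refine ⟨w^4*a, w^6*b, w^8*c, w^2*d, e, ?_⟩
      show (_ : Matrix (Fin 4) (Fin 4) K) = Fm i z (w^4*a) (w^6*b) (w^8*c) (w^2*d) e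
      exact conj w hw10 i z a b c d e
    · rintro ⟨a, b, c, d, e, rfl⟩
      refine ⟨Fm i z (w^6*a) (w^4*b) (w^2*c) (w^8*d) e, ⟨w^6*a, w^4*b, w^2*c, w^8*d, e, rfl⟩, ?_⟩
      show _ * Fm i z (w^6*a) (w^4*b) (w^2*c) (w^8*d) e * _ = _
      rw [conj w hw10]
      have ha : w^4*(w^6*a) = a := by linear_combination a*hw10
      have hb : w^6*(w^4*b) = b := by linear_combination b*hw10
      have hc : w^8*(w^2*c) = c := by linear_combination c*hw10
      have hd : w^2*(w^8*d) = d := by linear_combination d*hw10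
      rw [ha, hb, hc, hd]
      rfl
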